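/- arXiv:1911.00064 — 3 statements merged into one kernel-verified Lean document; each statement's English description precedes it below -/
import Mathlib

section
/- Let σ ≥ 1 be a real number and let u, v : [0,1] → ℂ be continuously differentiable. Then ∫₀¹ | |u(x)|^{2σ}u(x) − |v(x)|^{2σ}v(x) |² dx ≤ 2^{2σ+1}(4σ−1)² · ( (∫₀¹ |u(x)|² + |u'(x)|² dx)^{2σ} + (∫₀¹ |v(x)|² + |v'(x)|² dx)^{2σ} ) · ∫₀¹ |u(x) − v(x)|² dx. -/
/-!
For `β ≥ 1` and `‖b‖ ≤ ‖a‖`, split `‖a‖^β a - ‖b‖^β b = ‖a‖^β (a - b) + (‖a‖^β - ‖b‖^β) b` and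
bound `‖a‖^β - ‖b‖^β ≤ β ‖a‖^(β-1) (‖a‖ - ‖b‖)` by Bernoulli's inequality; this gives
`‖f a - f b‖ ≤ (β + 1)(‖a‖^β + ‖b‖^β)‖a - b‖` for `f a = ‖a‖^β a`, here with `β = 2σ`.
The one-dimensional Sobolev embedding `|w x|² ≤ 2 ‖w‖_V²`, obtained by applying the fundamental
theorem of calculus to `|w|²` between `x` and a minimum point of `|w|²`, then bounds
`|u x|^{4σ} + |v x|^{4σ}` by `2^{2σ} (‖u‖_V^{4σ} + ‖v‖_V^{4σ})`. Integrating the squared pointwise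
bound gives the claim; `σ ≥ 1` is exactly what makes `(2σ + 1)² ≤ (4σ - 1)²`.
-/

open MeasureTheory intervalIntegral Set

lemma rpow_sub_rpow_le_mul_sub {β s t : ℝ} (hβ : 1 ≤ β) (ht : 0 ≤ t) (hts : t ≤ s) :
    s ^ β - t ^ β ≤ β * s ^ (β - 1) * (s - t) := by
  rcases (ht.trans hts).eq_or_lt with rfl | hs
  · obtain rfl : t = 0 := le_antisymm hts ht
    simp [Real.zero_rpow (by linarith : β ≠ 0)]
  -- Bernoulli's inequality at `t / s`, multiplied by `s ^ β`
  have bernoulli := one_add_mul_self_le_rpow_one_add (s := t / s - 1)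
    (by linarith [div_nonneg ht hs.le]) hβ
  rw [add_sub_cancel, Real.div_rpow ht hs.le, le_div_iff₀ (Real.rpow_pos_of_pos hs β)]
    at bernoulli
  have key : s ^ β * s + β * s ^ β * (t - s) ≤ t ^ β * s :=
    calc _ = (1 + β * (t / s - 1)) * s ^ β * s := by field_simp
      _ ≤ _ := mul_le_mul_of_nonneg_right bernoulli hs.le
  rw [Real.rpow_sub_one hs.ne']
  field_simp
  linarith

variable {E : Type*} [NormedAddCommGroup E] [NormedSpace ℝ E]

lemma norm_rpow_smul_sub_rpow_smul_le_of_norm_le {β : ℝ} (hβ : 1 ≤ β) {a b : E}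
    (hba : ‖b‖ ≤ ‖a‖) :
    ‖‖a‖ ^ β • a - ‖b‖ ^ β • b‖ ≤ (β + 1) * ‖a‖ ^ β * ‖a - b‖ := by
  have hpow : ‖b‖ ^ β ≤ ‖a‖ ^ β := Real.rpow_le_rpow (norm_nonneg b) hba (by linarith)
  have hdiff : (‖a‖ ^ β - ‖b‖ ^ β) * ‖b‖ ≤ β * ‖a‖ ^ β * ‖a - b‖ :=
    calc (‖a‖ ^ β - ‖b‖ ^ β) * ‖b‖
        ≤ (β * ‖a‖ ^ (β - 1) * ‖a - b‖) * ‖a‖ := by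
          gcongr
          exact (rpow_sub_rpow_le_mul_sub hβ (norm_nonneg b) hba).trans
            (by gcongr; exact norm_sub_norm_le a b)
      _ = β * ‖a‖ ^ β * ‖a - b‖ := by
          rw [mul_right_comm _ ‖a - b‖, mul_assoc β,
            ← Real.rpow_add_one' (norm_nonneg a) (by linarith), sub_add_cancel]
  calc ‖‖a‖ ^ β • a - ‖b‖ ^ β • b‖
      = ‖‖a‖ ^ β • (a - b) + (‖a‖ ^ β - ‖b‖ ^ β) • b‖ := by
        rw [smul_sub, sub_smul]; abel_nf
    _ ≤ ‖a‖ ^ β * ‖a - b‖ + (‖a‖ ^ β - ‖b‖ ^ β) * ‖b‖ := by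
        refine (norm_add_le _ _).trans_eq ?_
        rw [norm_smul, norm_smul, Real.norm_of_nonneg (by positivity),
          Real.norm_of_nonneg (sub_nonneg.2 hpow)]
    _ ≤ (β + 1) * ‖a‖ ^ β * ‖a - b‖ := by linarith

lemma norm_rpow_smul_sub_rpow_smul_le {β : ℝ} (hβ : 1 ≤ β) (a b : E) :
    ‖‖a‖ ^ β • a - ‖b‖ ^ β • b‖ ≤ (β + 1) * (‖a‖ ^ β + ‖b‖ ^ β) * ‖a - b‖ := by
  rcases le_total ‖b‖ ‖a‖ with hba | hab
  · refine (norm_rpow_smul_sub_rpow_smul_le_of_norm_le hβ hba).trans ?_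
    gcongr
    exact le_add_of_nonneg_right (by positivity)
  · rw [← norm_neg, neg_sub, ← norm_neg (a - b), neg_sub]
    refine (norm_rpow_smul_sub_rpow_smul_le_of_norm_le hβ hab).trans ?_
    gcongr
    exact le_add_of_nonneg_left (by positivity)

lemma sq_norm_rpow_smul_sub_rpow_smul_le {β : ℝ} (hβ : 1 ≤ β) (a b : E) :
    ‖‖a‖ ^ β • a - ‖b‖ ^ β • b‖ ^ 2 ≤
      2 * (β + 1) ^ 2 * ((‖a‖ ^ 2) ^ β + (‖b‖ ^ 2) ^ β) * ‖a - b‖ ^ 2 := by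
  rw [← Real.rpow_pow_comm (norm_nonneg a), ← Real.rpow_pow_comm (norm_nonneg b)]
  calc ‖‖a‖ ^ β • a - ‖b‖ ^ β • b‖ ^ 2
      ≤ ((β + 1) * (‖a‖ ^ β + ‖b‖ ^ β) * ‖a - b‖) ^ 2 := by
        gcongr; exact norm_rpow_smul_sub_rpow_smul_le hβ a b
    _ ≤ _ := by
        nlinarith [sq_nonneg (‖a‖ ^ β - ‖b‖ ^ β), sq_nonneg ((β + 1) * ‖a - b‖)]

lemma abs_sub_le_integral_abs_deriv {g g' : ℝ → ℝ} {a b : ℝ}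
    (hg : ∀ t ∈ Icc a b, HasDerivWithinAt g (g' t) (Icc a b) t)
    (hg' : ContinuousOn g' (Icc a b)) {c d : ℝ} (hc : c ∈ Icc a b) (hd : d ∈ Icc a b)
    (hcd : c ≤ d) :
    |g d - g c| ≤ ∫ t in a..b, |g' t| := by
  have hsub : Icc c d ⊆ Icc a b := Icc_subset_Icc hc.1 hd.2
  have hsub' : uIcc c d ⊆ Icc a b := by rwa [uIcc_of_le hcd]
  have hftc : ∫ t in c..d, g' t = g d - g c := by
    refine integral_eq_sub_of_hasDeriv_right_of_le hcd
      (fun t ht => (hg t (hsub ht)).continuousWithinAt.mono hsub) (fun t ht => ?_)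
      ((hg'.mono hsub').intervalIntegrable)
    have ht' : t ∈ Ioo a b := ⟨hc.1.trans_lt ht.1, ht.2.trans_le hd.2⟩
    exact ((hg t (Ioo_subset_Icc_self ht')).hasDerivAt (Icc_mem_nhds ht'.1 ht'.2)).hasDerivWithinAt
  rw [← hftc]
  calc |∫ t in c..d, g' t| ≤ ∫ t in c..d, |g' t| := abs_integral_le_integral_abs hcd
    _ ≤ ∫ t in a..b, |g' t| :=
        integral_mono_interval hc.1 hcd hd.2 (Filter.Eventually.of_forall fun _ => abs_nonneg _)
          ((hg'.abs).intervalIntegrable_of_Icc (hc.1.trans (hcd.trans hd.2)))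

lemma mul_le_integral_add_mul_integral_abs_deriv {g g' : ℝ → ℝ} {a b : ℝ} (hab : a ≤ b)
    (hg : ∀ t ∈ Icc a b, HasDerivWithinAt g (g' t) (Icc a b) t)
    (hg' : ContinuousOn g' (Icc a b)) {x : ℝ} (hx : x ∈ Icc a b) :
    (b - a) * g x ≤ (∫ t in a..b, g t) + (b - a) * ∫ t in a..b, |g' t| := by
  have hgc : ContinuousOn g (Icc a b) := fun t ht => (hg t ht).continuousWithinAt
  obtain ⟨y, hy, hmin⟩ := isCompact_Icc.exists_isMinOn (nonempty_Icc.2 hab) hgc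
  have hy_le : (b - a) * g y ≤ ∫ t in a..b, g t := by
    rw [← smul_eq_mul, ← intervalIntegral.integral_const]
    exact integral_mono_on hab intervalIntegrable_const (hgc.intervalIntegrable_of_Icc hab)
      fun t ht => hmin ht
  have hxy : g x - g y ≤ ∫ t in a..b, |g' t| := by
    rcases le_total y x with hyx | hxy
    · exact (le_abs_self _).trans (abs_sub_le_integral_abs_deriv hg hg' hy hx hyx)
    · exact (le_abs_self _).trans ((abs_sub_comm _ _).trans_le
        (abs_sub_le_integral_abs_deriv hg hg' hx hy hxy))
  nlinarith [sub_nonneg.2 hab]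

variable {F : Type*} [NormedAddCommGroup F] [InnerProductSpace ℝ F]

lemma mul_sq_norm_le_one_add_mul_integral {w : ℝ → F} {a b : ℝ} (hab : a ≤ b)
    (hw : ContDiffOn ℝ 1 w (Icc a b)) {x : ℝ} (hx : x ∈ Icc a b) :
    (b - a) * ‖w x‖ ^ 2 ≤
      (1 + (b - a)) * ∫ t in a..b, ‖w t‖ ^ 2 + ‖derivWithin w (Icc a b) t‖ ^ 2 := by
  rcases hab.eq_or_lt with rfl | hab'
  · simp
  set w' := derivWithin w (Icc a b)
  have hwc : ContinuousOn w (Icc a b) := hw.continuousOn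
  have hw'c : ContinuousOn w' (Icc a b) :=
    hw.continuousOn_derivWithin (uniqueDiffOn_Icc hab') le_rfl
  have hderiv : ∀ t ∈ Icc a b,
      HasDerivWithinAt (‖w ·‖ ^ 2) (2 * inner ℝ (w t) (w' t)) (Icc a b) t := fun t ht =>
    (hw.differentiableOn one_ne_zero t ht).hasDerivWithinAt.norm_sq
  have hg'c : ContinuousOn (fun t => 2 * inner ℝ (w t) (w' t)) (Icc a b) :=
    continuousOn_const.mul (hwc.inner hw'c)
  have hH : IntervalIntegrable (fun t => ‖w t‖ ^ 2 + ‖w' t‖ ^ 2) volume a b :=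
    ((hwc.norm.pow 2).add (hw'c.norm.pow 2)).intervalIntegrable_of_Icc hab
  have hg_le : (∫ t in a..b, ‖w t‖ ^ 2) ≤ ∫ t in a..b, ‖w t‖ ^ 2 + ‖w' t‖ ^ 2 :=
    integral_mono_on hab ((hwc.norm.pow 2).intervalIntegrable_of_Icc hab) hH
      fun t _ => le_add_of_nonneg_right (sq_nonneg _)
  have hg'_le : (∫ t in a..b, |2 * inner ℝ (w t) (w' t)|) ≤
      ∫ t in a..b, ‖w t‖ ^ 2 + ‖w' t‖ ^ 2 :=
    integral_mono_on hab (hg'c.abs.intervalIntegrable_of_Icc hab) hH fun t _ => by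
      rw [abs_mul, abs_two]
      nlinarith [abs_real_inner_le_norm (w t) (w' t), sq_nonneg (‖w t‖ - ‖w' t‖)]
  have h := mul_le_integral_add_mul_integral_abs_deriv hab hderiv hg'c hx
  nlinarith [sub_nonneg.2 hab]

lemma sq_norm_le_two_mul_integral {w : ℝ → F} (hw : ContDiffOn ℝ 1 w (Icc 0 1)) {x : ℝ}
    (hx : x ∈ Icc (0 : ℝ) 1) :
    ‖w x‖ ^ 2 ≤ 2 * ∫ t in (0 : ℝ)..1, ‖w t‖ ^ 2 + ‖derivWithin w (Icc 0 1) t‖ ^ 2 := by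
  simpa [one_add_one_eq_two] using mul_sq_norm_le_one_add_mul_integral zero_le_one hw hx

lemma rpow_sq_norm_le_two_rpow_mul_integral_rpow {w : ℝ → F} (hw : ContDiffOn ℝ 1 w (Icc 0 1))
    {p : ℝ} (hp : 0 ≤ p) {x : ℝ} (hx : x ∈ Icc (0 : ℝ) 1) :
    (‖w x‖ ^ 2) ^ p ≤
      2 ^ p * (∫ t in (0 : ℝ)..1, ‖w t‖ ^ 2 + ‖derivWithin w (Icc 0 1) t‖ ^ 2) ^ p := by
  rw [← Real.mul_rpow zero_le_two (integral_nonneg zero_le_one fun t _ => by positivity)]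
  exact Real.rpow_le_rpow (sq_nonneg _) (sq_norm_le_two_mul_integral hw hx) hp

/-- Property (2.5) of the nonlinearity of the stochastic nonlinear Schrödinger equation:
for `σ ≥ 1` and `u, v : [0,1] → ℂ` continuously differentiable,
`‖f(u) − f(v)‖² ≤ 2^{2σ+1}(4σ−1)²(‖u‖_V^{4σ} + ‖v‖_V^{4σ})‖u − v‖²`,
where `f(w)(x) = |w(x)|^{2σ}w(x)`, `‖·‖` is the `L²(0,1)`-norm and
`‖w‖_V² = ∫₀¹ |w|² + |w'|² dx` is the squared `H¹(0,1)`-norm. -/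
theorem stmt_3 (σ : ℝ) (hσ : 1 ≤ σ) (u v : ℝ → ℂ)
    (hu : ContDiffOn ℝ 1 u (Set.Icc (0:ℝ) 1)) (hv : ContDiffOn ℝ 1 v (Set.Icc (0:ℝ) 1)) :
    (∫ x in (0:ℝ)..1,
        ‖(‖u x‖ ^ (2 * σ) : ℝ) * u x -
          (‖v x‖ ^ (2 * σ) : ℝ) * v x‖ ^ 2) ≤
      (2:ℝ) ^ (2 * σ + 1) * (4 * σ - 1) ^ 2 *
        ((∫ x in (0:ℝ)..1, ‖u x‖ ^ 2 +
            ‖derivWithin u (Set.Icc (0:ℝ) 1) x‖ ^ 2) ^ (2 * σ) +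
         (∫ x in (0:ℝ)..1, ‖v x‖ ^ 2 +
            ‖derivWithin v (Set.Icc (0:ℝ) 1) x‖ ^ 2) ^ (2 * σ)) *
        ∫ x in (0:ℝ)..1, ‖u x - v x‖ ^ 2 := by
  set A := ∫ x in (0:ℝ)..1, ‖u x‖ ^ 2 + ‖derivWithin u (Icc 0 1) x‖ ^ 2
  set B := ∫ x in (0:ℝ)..1, ‖v x‖ ^ 2 + ‖derivWithin v (Icc 0 1) x‖ ^ 2
  set C := (2:ℝ) ^ (2 * σ + 1) * (4 * σ - 1) ^ 2 * (A ^ (2 * σ) + B ^ (2 * σ))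
  simp only [← Complex.real_smul]
  have hσ' : 1 ≤ 2 * σ := by linarith
  have hpt : ∀ x ∈ Icc (0:ℝ) 1,
      ‖‖u x‖ ^ (2 * σ) • u x - ‖v x‖ ^ (2 * σ) • v x‖ ^ 2 ≤ C * ‖u x - v x‖ ^ 2 := by
    intro x hx
    refine (sq_norm_rpow_smul_sub_rpow_smul_le hσ' _ _).trans ?_
    have hconst : (2 * σ + 1) ^ 2 ≤ (4 * σ - 1) ^ 2 := by nlinarith
    calc 2 * (2 * σ + 1) ^ 2 * ((‖u x‖ ^ 2) ^ (2 * σ) + (‖v x‖ ^ 2) ^ (2 * σ)) * ‖u x - v x‖ ^ 2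
        ≤ 2 * (4 * σ - 1) ^ 2 * (2 ^ (2 * σ) * A ^ (2 * σ) + 2 ^ (2 * σ) * B ^ (2 * σ)) *
          ‖u x - v x‖ ^ 2 := by
          gcongr
          exacts [rpow_sq_norm_le_two_rpow_mul_integral_rpow hu (by linarith) hx,
            rpow_sq_norm_le_two_rpow_mul_integral_rpow hv (by linarith) hx]
      _ = C * ‖u x - v x‖ ^ 2 := by simp only [C, Real.rpow_add_one two_ne_zero]; ring
  have huc := hu.continuousOn
  have hvc := hv.continuousOn
  calc _ ≤ ∫ x in (0:ℝ)..1, C * ‖u x - v x‖ ^ 2 := by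
        refine integral_mono_on zero_le_one (ContinuousOn.intervalIntegrable_of_Icc zero_le_one ?_)
          (ContinuousOn.intervalIntegrable_of_Icc zero_le_one (by fun_prop)) hpt
        exact (((huc.norm.rpow_const fun _ _ => Or.inr (by linarith)).smul huc).sub
          ((hvc.norm.rpow_const fun _ _ => Or.inr (by linarith)).smul hvc)).norm.pow 2
    _ = C * ∫ x in (0:ℝ)..1, ‖u x - v x‖ ^ 2 := integral_const_mul C _
end

section
/- Let σ ≥ 1 be a real number and let v : ℝ → ℂ be differentiable at a point x. Then the function y ↦ |v(y)|^{2σ} v(y) is differentiable at x, its derivative D at x equals |v(x)|^{2σ} v'(x) + 2σ |v(x)|^{2σ−2} Re( conj(v(x)) · v'(x) ) · v(x) (understood as |v(x)|^{2σ} v'(x) when v(x) = 0), and Re( D · conj(v'(x)) ) = |v(x)|^{2σ} |v'(x)|² + 2σ |v(x)|^{2σ−2} ( Re( conj(v(x)) · v'(x) ) )² ≥ 0. -/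
/-!
Writing `|v|^{2σ} v` as `‖v‖ ^ p • v` with `p = 2σ`, the chain rule for the `C¹` map
`u ↦ ‖u‖ ^ p` (valid for `p > 1`, including at `u = 0`) and the product rule give the
derivative, and in any real inner product space
`⟪w, ‖u‖ ^ p • w + (p ‖u‖ ^ (p - 2) ⟪u, w⟫) • u⟫ = ‖u‖ ^ p ‖w‖² + p ‖u‖ ^ (p - 2) ⟪u, w⟫²`,
a sum of nonnegative terms. On `ℂ` the real inner product `⟪w, z⟫` is `Re (z * conj w)`.
-/

open scoped RealInnerProductSpace ComplexConjugate

section NormRpowSmul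

variable {E : Type*} [NormedAddCommGroup E] [InnerProductSpace ℝ E]

noncomputable def normRpowSmulDeriv (p : ℝ) (u w : E) : E :=
  ‖u‖ ^ p • w + (p * ‖u‖ ^ (p - 2) * ⟪u, w⟫) • u

theorem HasDerivAt.norm_rpow_smul {f : ℝ → E} {f' : E} {x p : ℝ} (hf : HasDerivAt f f' x)
    (hp : 1 < p) :
    HasDerivAt (fun y => ‖f y‖ ^ p • f y) (normRpowSmulDeriv p (f x) f') x := by
  have hnorm : HasDerivAt (fun y => ‖f y‖ ^ p) (p * ‖f x‖ ^ (p - 2) * ⟪f x, f'⟫) x := by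
    have h := (hasFDerivAt_norm_rpow (f x) hp).comp_hasDerivAt x hf
    rw [smul_apply, innerSL_apply_apply, smul_eq_mul] at h
    exact h
  exact hnorm.smul hf

theorem inner_normRpowSmulDeriv (p : ℝ) (u w : E) :
    ⟪w, normRpowSmulDeriv p u w⟫ = ‖u‖ ^ p * ‖w‖ ^ 2 + p * ‖u‖ ^ (p - 2) * ⟪u, w⟫ ^ 2 := by
  rw [normRpowSmulDeriv, inner_add_right, inner_smul_right, inner_smul_right,
    real_inner_self_eq_norm_sq, real_inner_comm u w]
  ring

theorem inner_normRpowSmulDeriv_nonneg {p : ℝ} (hp : 0 ≤ p) (u w : E) :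
    0 ≤ ⟪w, normRpowSmulDeriv p u w⟫ := by
  rw [inner_normRpowSmulDeriv]
  positivity

end NormRpowSmul

theorem Complex.re_conj_mul_eq_inner (z w : ℂ) : (conj z * w).re = ⟪z, w⟫ := by
  rw [mul_comm, ← Complex.inner]

/-- Pointwise differentiation identity and sign condition for the nonlinearity
`f(v) = |v|^{2σ}v` (underlying property Re(f(v), Av) ≥ 0 with A = −Δ): if `σ ≥ 1` and
`v : ℝ → ℂ` is differentiable at `x`, then `y ↦ |v(y)|^{2σ} v(y)` is differentiable at `x`
with derivative `D = |v(x)|^{2σ} v'(x) + 2σ |v(x)|^{2σ−2} Re(conj(v(x)) v'(x)) v(x)`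
(which equals `|v(x)|^{2σ} v'(x)` when `v(x) = 0`, since the second summand carries the
factor `v(x)`), and
`Re(D conj(v'(x))) = |v(x)|^{2σ} |v'(x)|² + 2σ |v(x)|^{2σ−2} (Re(conj(v(x)) v'(x)))² ≥ 0`. -/
theorem stmt_6 (σ : ℝ) (hσ : 1 ≤ σ) (v : ℝ → ℂ) (x : ℝ)
    (hv : DifferentiableAt ℝ v x) :
    HasDerivAt (fun y => ((‖v y‖ ^ (2 * σ) : ℝ) : ℂ) * v y)
      (((‖v x‖ ^ (2 * σ) : ℝ) : ℂ) * deriv v x +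
        ((2 * σ * ‖v x‖ ^ (2 * σ - 2) *
            ((starRingEnd ℂ) (v x) * deriv v x).re : ℝ) : ℂ) * v x) x ∧
    ((((‖v x‖ ^ (2 * σ) : ℝ) : ℂ) * deriv v x +
        ((2 * σ * ‖v x‖ ^ (2 * σ - 2) *
            ((starRingEnd ℂ) (v x) * deriv v x).re : ℝ) : ℂ) * v x) *
          (starRingEnd ℂ) (deriv v x)).re =
      ‖v x‖ ^ (2 * σ) * ‖deriv v x‖ ^ 2 +
        2 * σ * ‖v x‖ ^ (2 * σ - 2) *
          ((starRingEnd ℂ) (v x) * deriv v x).re ^ 2 ∧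
    0 ≤ ((((‖v x‖ ^ (2 * σ) : ℝ) : ℂ) * deriv v x +
        ((2 * σ * ‖v x‖ ^ (2 * σ - 2) *
            ((starRingEnd ℂ) (v x) * deriv v x).re : ℝ) : ℂ) * v x) *
          (starRingEnd ℂ) (deriv v x)).re := by
  simp only [← Complex.real_smul, Complex.re_conj_mul_eq_inner, ← Complex.inner]
  change HasDerivAt _ (normRpowSmulDeriv (2 * σ) (v x) (deriv v x)) x ∧
    ⟪deriv v x, normRpowSmulDeriv (2 * σ) (v x) (deriv v x)⟫ = _ ∧
    0 ≤ ⟪deriv v x, normRpowSmulDeriv (2 * σ) (v x) (deriv v x)⟫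
  exact ⟨hv.hasDerivAt.norm_rpow_smul (by linarith), inner_normRpowSmulDeriv _ _ _,
    inner_normRpowSmulDeriv_nonneg (by linarith) _ _⟩
end

section
/- Let σ ≥ 1 be a real number and let v : [0,1] → ℂ be twice continuously differentiable with v(0) = 0 and v(1) = 0. Then Re ∫₀¹ |v(x)|^{2σ} v(x) · conj( −v''(x) ) dx ≥ 0. -/
open MeasureTheory intervalIntegral

/-- Property (2.6) of the nonlinearity of the stochastic nonlinear Schrödinger equation:
for `σ ≥ 1` and `v : [0,1] → ℂ` twice continuously differentiable with Dirichlet boundary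
conditions `v(0) = v(1) = 0`, one has `Re(f(v), Av) = Re ∫₀¹ |v|^{2σ} v conj(−v'') dx ≥ 0`. -/
theorem stmt_7 (σ : ℝ) (hσ : 1 ≤ σ) (v : ℝ → ℂ)
    (hv : ContDiffOn ℝ 2 v (Set.Icc (0:ℝ) 1)) (hv0 : v 0 = 0) (hv1 : v 1 = 0) :
    0 ≤ (∫ x in (0:ℝ)..1,
          ((‖v x‖ ^ (2 * σ) : ℝ) : ℂ) * v x *
            (starRingEnd ℂ)
              (-(derivWithin (derivWithin v (Set.Icc (0:ℝ) 1)) (Set.Icc (0:ℝ) 1) x))).re := by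
  set D : Set ℝ := Set.Icc (0:ℝ) 1 with hDdef
  have hD : UniqueDiffOn ℝ D := uniqueDiffOn_Icc one_pos
  have huIcc : Set.uIcc (0:ℝ) 1 = D := Set.uIcc_of_le zero_le_one
  set v1 : ℝ → ℂ := derivWithin v D with hv1def
  set v2 : ℝ → ℂ := derivWithin v1 D with hv2def
  -- basic differentiability facts
  have hvd : ∀ x ∈ D, HasDerivWithinAt v (v1 x) D x := fun x hx =>
    ((hv.differentiableOn (by norm_num)) x hx).hasDerivWithinAt
  have hv1c : ContDiffOn ℝ 1 v1 D := hv.derivWithin hD (by norm_num)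
  have hv1d : ∀ x ∈ D, HasDerivWithinAt v1 (v2 x) D x := fun x hx =>
    ((hv1c.differentiableOn (by norm_num)) x hx).hasDerivWithinAt
  have hvcont : ContinuousOn v D := hv.continuousOn
  have hv1cont : ContinuousOn v1 D := hv1c.continuousOn
  have hv2cont : ContinuousOn v2 D := hv1c.continuousOn_derivWithin hD (by norm_num)
  -- the nonlinearity F and its derivative
  set a : ℝ → ℝ := fun x => Complex.normSq (v x) with hadef
  set r : ℝ → ℝ := fun x => ((starRingEnd ℂ) (v x) * v1 x).re with hrdef
  have hacont : ContinuousOn a D := Complex.continuous_normSq.comp_continuousOn hvcont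
  have hrcont : ContinuousOn r D :=
    (Complex.continuous_re.comp_continuousOn
      (((Complex.continuous_conj.comp_continuousOn hvcont)).mul hv1cont))
  set F : ℝ → ℂ := fun x => ((a x ^ σ : ℝ) : ℂ) * v x with hFdef
  set F' : ℝ → ℂ := fun x =>
    ((σ * a x ^ (σ - 1) * (2 * r x) : ℝ) : ℂ) * v x + ((a x ^ σ : ℝ) : ℂ) * v1 x with hF'def
  -- derivative of a
  have hconj : ∀ x ∈ D, HasDerivWithinAt (fun y => (starRingEnd ℂ) (v y))
      ((starRingEnd ℂ) (v1 x)) D x := by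
    intro x hx
    exact (Complex.conjCLE.hasFDerivAt.comp_hasDerivWithinAt x (hvd x hx) : _)
  have had : ∀ x ∈ D, HasDerivWithinAt a (2 * r x) D x := by
    intro x hx
    have hmul : HasDerivWithinAt (fun y => (starRingEnd ℂ) (v y) * v y)
        ((starRingEnd ℂ) (v1 x) * v x + (starRingEnd ℂ) (v x) * v1 x) D x :=
      (hconj x hx).mul (hvd x hx)
    have hre : HasDerivWithinAt (fun y => ((starRingEnd ℂ) (v y) * v y).re)
        (((starRingEnd ℂ) (v1 x) * v x + (starRingEnd ℂ) (v x) * v1 x).re) D x :=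
      (Complex.reCLM.hasFDerivAt.comp_hasDerivWithinAt x hmul : _)
    have heq : (fun y => ((starRingEnd ℂ) (v y) * v y).re) = a := by
      funext y
      simp [hadef, Complex.normSq_apply, Complex.mul_re]
    have heq2 : (((starRingEnd ℂ) (v1 x) * v x + (starRingEnd ℂ) (v x) * v1 x).re) = 2 * r x := by
      have : (starRingEnd ℂ) (v1 x) * v x = (starRingEnd ℂ) ((starRingEnd ℂ) (v x) * v1 x) := by
        rw [map_mul, Complex.conj_conj, mul_comm]
      rw [Complex.add_re, this, Complex.conj_re, hrdef]; ring
    rw [heq, heq2] at hre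
    exact hre
  -- derivative of F
  have hFd : ∀ x ∈ D, HasDerivWithinAt F (F' x) D x := by
    intro x hx
    have hpow : HasDerivAt (fun t : ℝ => t ^ σ) (σ * a x ^ (σ - 1)) (a x) :=
      Real.hasDerivAt_rpow_const (Or.inr hσ)
    have haσ : HasDerivWithinAt (fun y => a y ^ σ) (σ * a x ^ (σ - 1) * (2 * r x)) D x :=
      hpow.comp_hasDerivWithinAt x (had x hx)
    have haσC : HasDerivWithinAt (fun y => ((a y ^ σ : ℝ) : ℂ))
        ((σ * a x ^ (σ - 1) * (2 * r x) : ℝ) : ℂ) D x :=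
      (Complex.ofRealCLM.hasFDerivAt.comp_hasDerivWithinAt x haσ : _)
    exact haσC.mul (hvd x hx)
  -- continuity of F'
  have hpowcont : ∀ p : ℝ, 0 ≤ p → ContinuousOn (fun x => a x ^ p) D := by
    intro p hp
    exact (continuous_iff_continuousAt.2 fun t =>
      Real.continuousAt_rpow_const t p (Or.inr hp)).comp_continuousOn hacont
  have hF'cont : ContinuousOn F' D := by
    apply ContinuousOn.add
    · exact (Complex.continuous_ofReal.comp_continuousOn
        (((continuousOn_const.mul (hpowcont (σ - 1) (by linarith))).mul
          (continuousOn_const.mul hrcont)))).mul hvcont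
    · exact (Complex.continuous_ofReal.comp_continuousOn
        (hpowcont σ (by linarith))).mul hv1cont
  -- integration by parts with w = -conj v1
  set w : ℝ → ℂ := fun x => -((starRingEnd ℂ) (v1 x)) with hwdef
  set w' : ℝ → ℂ := fun x => -((starRingEnd ℂ) (v2 x)) with hw'def
  have hwd : ∀ x ∈ D, HasDerivWithinAt w (w' x) D x := by
    intro x hx
    exact ((Complex.conjCLE.hasFDerivAt.comp_hasDerivWithinAt x (hv1d x hx) : _) :
      HasDerivWithinAt (fun y => (starRingEnd ℂ) (v1 y)) ((starRingEnd ℂ) (v2 x)) D x).neg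
  have hF'int : IntervalIntegrable F' volume 0 1 := by
    apply ContinuousOn.intervalIntegrable; rwa [huIcc]
  have hw'int : IntervalIntegrable w' volume 0 1 := by
    apply ContinuousOn.intervalIntegrable
    rw [huIcc]
    exact (Complex.continuous_conj.comp_continuousOn hv2cont).neg
  have hibp : ∫ x in (0:ℝ)..1, F x * w' x
      = F 1 * w 1 - F 0 * w 0 - ∫ x in (0:ℝ)..1, F' x * w x := by
    apply integral_mul_deriv_eq_deriv_mul_of_hasDerivWithinAt
    · intro x hx; rw [huIcc] at hx ⊢; exact hFd x hx
    · intro x hx; rw [huIcc] at hx ⊢; exact hwd x hx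
    · exact hF'int
    · exact hw'int
  have hF0 : F 0 = 0 := by simp [hFdef, hv0]
  have hF1 : F 1 = 0 := by simp [hFdef, hv1]
  -- rewrite the goal integrand as F * w'
  have hintegrand : ∀ x, ((‖v x‖ ^ (2 * σ) : ℝ) : ℂ) * v x *
      (starRingEnd ℂ) (-(v2 x)) = F x * w' x := by
    intro x
    have habs : ‖v x‖ ^ (2 * σ) = a x ^ σ := by
      rw [Real.rpow_mul (norm_nonneg _) 2 σ, Real.rpow_two, Complex.sq_norm]
    rw [habs, map_neg]
  have hgoal : (∫ x in (0:ℝ)..1,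
      ((‖v x‖ ^ (2 * σ) : ℝ) : ℂ) * v x *
        (starRingEnd ℂ) (-(v2 x))) = ∫ x in (0:ℝ)..1, F' x * (starRingEnd ℂ) (v1 x) := by
    rw [show (fun x => ((‖v x‖ ^ (2 * σ) : ℝ) : ℂ) * v x *
        (starRingEnd ℂ) (-(v2 x))) = fun x => F x * w' x from funext hintegrand]
    rw [hibp, hF0, hF1]
    simp only [mul_zero, zero_mul, sub_zero, zero_sub]
    rw [← intervalIntegral.integral_neg]
    congr 1
    funext x
    simp [hwdef]
  rw [hgoal]
  -- now take real parts
  have hGcont : ContinuousOn (fun x => F' x * (starRingEnd ℂ) (v1 x)) D :=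
    hF'cont.mul (Complex.continuous_conj.comp_continuousOn hv1cont)
  have hGint : IntervalIntegrable (fun x => F' x * (starRingEnd ℂ) (v1 x)) volume 0 1 := by
    apply ContinuousOn.intervalIntegrable; rwa [huIcc]
  have hre : (∫ x in (0:ℝ)..1, F' x * (starRingEnd ℂ) (v1 x)).re
      = ∫ x in (0:ℝ)..1, (F' x * (starRingEnd ℂ) (v1 x)).re := by
    exact (Complex.reCLM.intervalIntegral_comp_comm hGint).symm
  rw [hre]
  apply intervalIntegral.integral_nonneg zero_le_one
  intro x hx
  -- pointwise nonnegativity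
  have ha0 : 0 ≤ a x := Complex.normSq_nonneg _
  have hkey : (F' x * (starRingEnd ℂ) (v1 x)).re
      = σ * a x ^ (σ - 1) * (2 * r x) * r x + a x ^ σ * Complex.normSq (v1 x) := by
    have h1 : F' x * (starRingEnd ℂ) (v1 x)
        = ((σ * a x ^ (σ - 1) * (2 * r x) : ℝ) : ℂ) * (v x * (starRingEnd ℂ) (v1 x))
          + ((a x ^ σ : ℝ) : ℂ) * ((Complex.normSq (v1 x) : ℝ) : ℂ) := by
      rw [hF'def]
      simp only []
      rw [← Complex.mul_conj (v1 x)]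
      ring
    rw [h1, Complex.add_re, Complex.re_ofReal_mul, Complex.re_ofReal_mul]
    have h2 : (v x * (starRingEnd ℂ) (v1 x)).re = r x := by
      have : v x * (starRingEnd ℂ) (v1 x) = (starRingEnd ℂ) ((starRingEnd ℂ) (v x) * v1 x) := by
        rw [map_mul, Complex.conj_conj]
      rw [this]
      exact Complex.conj_re _
    rw [h2, Complex.ofReal_re]
  rw [hkey]
  have h3 : σ * a x ^ (σ - 1) * (2 * r x) * r x = 2 * σ * a x ^ (σ - 1) * (r x)^2 := by ring
  rw [h3]
  have hσ0 : (0:ℝ) ≤ σ := by linarith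
  have t1 : 0 ≤ 2 * σ * a x ^ (σ - 1) * (r x)^2 := by
    apply mul_nonneg (mul_nonneg (by linarith) (Real.rpow_nonneg ha0 _)) (sq_nonneg _)
  have t2 : 0 ≤ a x ^ σ * Complex.normSq (v1 x) :=
    mul_nonneg (Real.rpow_nonneg ha0 _) (Complex.normSq_nonneg _)
  linarith
end
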